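/- Let A be a nonempty affine space modelled on a finite-dimensional real vector space V, let Aff(A, ℝ) denote the vector space of affine maps A → ℝ, and let W := Aff(A, ℝ)* be its dual space. Then: (i) the evaluation map ι : A → W, ι(a)(f) := f(a), is an injective affine map whose linear part sends w ∈ V to the functional f ↦ fᵛ(w); (ii) the linear functional s : W → ℝ given by evaluation at the constant function 1_A satisfies s(ι(a)) = 1 for all a ∈ A; (iii) the image ι(A) spans W; and consequently (iv) every affine map g : A → ℝ factors as g = ĝ ∘ ι for a unique linear functional ĝ : W → ℝ. (Thus W, with the embedding ι, is the vector hull of A, of dimension one greater than A.) -/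
import Mathlib


/-- Evaluation at a point `a` of the affine space, as a linear functional on the vector
space `Aff(A, ℝ)` of affine functions; `evalAt : A → Aff(A, ℝ)*` is the canonical
embedding of the affine space into (the model of) its vector hull. -/
def evalAt {V P : Type*} [AddCommGroup V] [Module ℝ V] [AddTorsor V P]
    (a : P) : (P →ᵃ[ℝ] ℝ) →ₗ[ℝ] ℝ where
  toFun f := f a
  map_add' f g := by simp
  map_smul' c f := by simp

/-- The space of affine maps `P →ᵃ[ℝ] ℝ` is linearly equivalent to `ℝ × (V →ₗ[ℝ] ℝ)`,
after choosing a base point. -/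
noncomputable def affEquiv {V P : Type*} [AddCommGroup V] [Module ℝ V] [AddTorsor V P]
    (a₀ : P) : (P →ᵃ[ℝ] ℝ) ≃ₗ[ℝ] ℝ × (V →ₗ[ℝ] ℝ) where
  toFun f := (f a₀, f.linear)
  invFun p := AffineMap.const ℝ P p.1 +
    p.2.toAffineMap.comp ((AffineEquiv.vaddConst ℝ a₀).symm : P ≃ᵃ[ℝ] V).toAffineMap
  map_add' f g := by simp
  map_smul' c f := by simp
  left_inv f := by
    ext x
    simp only [AffineMap.coe_add, Pi.add_apply, AffineMap.const_apply, AffineMap.comp_apply,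
      AffineEquiv.coe_toAffineMap, LinearMap.coe_toAffineMap]
    have : f x = f ((x -ᵥ a₀) +ᵥ a₀) := by rw [vsub_vadd]
    rw [this, AffineMap.map_vadd]
    simp [add_comm]
  right_inv p := by
    refine Prod.ext ?_ ?_
    · simp
    · ext w
      simp only [AffineMap.add_linear, AffineMap.const_linear, LinearMap.add_apply,
        LinearMap.zero_apply, zero_add]
      show p.2 (((AffineEquiv.vaddConst ℝ a₀).symm).linear w) = p.2 w
      rfl

instance affFinDim {V P : Type*} [AddCommGroup V] [Module ℝ V] [FiniteDimensional ℝ V]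
    [AddTorsor V P] : FiniteDimensional ℝ (P →ᵃ[ℝ] ℝ) := by
  obtain ⟨a₀⟩ := (inferInstance : Nonempty P)
  exact FiniteDimensional.of_injective (affEquiv (V := V) a₀).toLinearMap
    (affEquiv (V := V) a₀).injective

/-- the vector hull. Let `A = P` be a nonempty affine space modelled
on a finite-dimensional real vector space `V` and `W = Aff(A, ℝ)*`.  Then (i) the
evaluation map `ι = evalAt : A → W` is injective and affine, its linear part sending
`w ∈ V` to the functional `f ↦ fᵛ(w)`; (ii) the linear functional `s : W → ℝ` of
evaluation at the constant function `1_A` satisfies `s (ι a) = 1` for all `a`; (iii) the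
image `ι(A)` spans `W`; and (iv) every affine map `g : A → ℝ` factors as `g = G ∘ ι` for
a unique linear functional `G : W → ℝ`. -/
theorem stmt_12 {V P : Type*} [AddCommGroup V] [Module ℝ V] [FiniteDimensional ℝ V]
    [AddTorsor V P] :
    Function.Injective (evalAt (V := V) (P := P)) ∧
    (∀ (a : P) (w : V) (f : P →ᵃ[ℝ] ℝ),
      evalAt (w +ᵥ a) f = evalAt a f + f.linear w) ∧
    (∀ a : P, evalAt a (AffineMap.const ℝ P (1 : ℝ)) = 1) ∧
    Submodule.span ℝ (Set.range (evalAt (V := V) (P := P))) = ⊤ ∧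
    (∀ g : P →ᵃ[ℝ] ℝ, ∃! G : ((P →ᵃ[ℝ] ℝ) →ₗ[ℝ] ℝ) →ₗ[ℝ] ℝ,
      ∀ a : P, G (evalAt a) = g a) := by
  have hspan : Submodule.span ℝ (Set.range (evalAt (V := V) (P := P))) = ⊤ := by
    apply Submodule.span_eq_top_of_ne_zero
    intro f hf
    by_contra! h
    exact hf (AffineMap.ext fun x => by simpa [evalAt] using h (evalAt x) ⟨x, rfl⟩)
  refine ⟨?_, ?_, ?_, hspan, ?_⟩
  · intro a b h
    have key : ∀ φ : V →ₗ[ℝ] ℝ, φ (b -ᵥ a) = 0 := by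
      intro φ
      have := congrArg (fun G : (P →ᵃ[ℝ] ℝ) →ₗ[ℝ] ℝ =>
        G (φ.toAffineMap.comp ((AffineEquiv.vaddConst ℝ a).symm : P ≃ᵃ[ℝ] V).toAffineMap)) h
      simpa [evalAt] using this.symm
    have : b -ᵥ a = 0 := (Module.forall_dual_apply_eq_zero_iff ℝ _).mp key
    exact (vsub_eq_zero_iff_eq.mp this).symm
  · intro a w f
    simp [evalAt, AffineMap.map_vadd, add_comm]
  · intro a
    simp [evalAt]
  · intro g
    refine ⟨LinearMap.applyₗ g, fun a => rfl, ?_⟩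
    intro G hG
    apply LinearMap.ext_on hspan
    rintro _ ⟨a, rfl⟩
    exact (hG a).trans rfl
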